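/- arXiv:2109.10245 — 2 statements merged into one kernel-verified Lean document; each statement's English description precedes it below -/
import Mathlib

section
/- Let $G$ be a group, $N \trianglelefteq G$ a subgroup with a finite descending filtration $N = N_1 \supseteq N_2 \supseteq \cdots \supseteq N_r = \{1\}$ by normal subgroups of $N$, and let $\sigma \in G$ normalize each $N_i$. Assume: (a) for every $k$ and every $n \in N_k$, the commutator $\sigma^{-1} n^{-1} \sigma n$ lies in $N_{k+1}$, and (b) for every $k$, the map on the abelian quotient $N_k / N_{k+1}$ induced by $n \mapsto (\sigma^{-1} n^{-1} \sigma)\, n$ is a bijection of $N_k/N_{k+1}$. Then the map $N \times \{1\} \to N$, i.e., the map $n \mapsto \sigma^{-1} n^{-1} \sigma\, n$, is a bijection from $N$ to $N$. -/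
theorem stmt12 {G : Type} [Group G] (σ : G) (r : ℕ) (N : ℕ → Subgroup G)
    (hanti : ∀ i j : ℕ, i ≤ j → N j ≤ N i)
    (hbot : ∀ k : ℕ, r ≤ k → N k = ⊥)
    (hnormal : ∀ i : ℕ, ∀ n ∈ N i, ∀ m ∈ N 1, m * n * m⁻¹ ∈ N i)
    (hσ : ∀ i : ℕ, ∀ n : G, n ∈ N i ↔ σ * n * σ⁻¹ ∈ N i)
    (hcomm : ∀ i j : ℕ, ∀ a ∈ N i, ∀ b ∈ N j, a * b * a⁻¹ * b⁻¹ ∈ N (i + j))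
    (ha : ∀ k : ℕ, ∀ n ∈ N k, σ⁻¹ * n⁻¹ * σ * n ∈ N (k + 1))
    (hsurj : ∀ k : ℕ, ∀ m ∈ N k, ∃ n ∈ N k, (σ⁻¹ * n⁻¹ * σ * n) * m⁻¹ ∈ N (k + 1))
    (hinj : ∀ k : ℕ, ∀ n ∈ N k, ∀ n' ∈ N k,
      (σ⁻¹ * n⁻¹ * σ * n) * (σ⁻¹ * n'⁻¹ * σ * n')⁻¹ ∈ N (k + 1) → n * n'⁻¹ ∈ N (k + 1)) :
    Set.BijOn (fun n : G => σ⁻¹ * n⁻¹ * σ * n) (N 1 : Set G) (N 1 : Set G) := by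
  -- the commutator map sends N i into N i
  have hmemσ : ∀ i : ℕ, ∀ n : G, n ∈ N i → σ⁻¹ * n⁻¹ * σ ∈ N i := by
    intro i n hn
    rw [hσ]
    have h : σ * (σ⁻¹ * n⁻¹ * σ) * σ⁻¹ = n⁻¹ := by group
    rw [h]
    exact inv_mem hn
  have hmem : ∀ i : ℕ, ∀ n : G, n ∈ N i → σ⁻¹ * n⁻¹ * σ * n ∈ N i :=
    fun i n hn => mul_mem (hmemσ i n hn) hn
  -- injectivity kernel: if the commutator is trivial, the element is trivial
  have hfone : ∀ d k : ℕ, r ≤ k + d → ∀ n ∈ N k, σ⁻¹ * n⁻¹ * σ * n = 1 → n = 1 := by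
    intro d
    induction d with
    | zero =>
      intro k hk n hn _
      rw [hbot k (by omega)] at hn
      exact Subgroup.mem_bot.mp hn
    | succ d ih =>
      intro k hk n hn hf
      have h1 : (σ⁻¹ * n⁻¹ * σ * n) * (σ⁻¹ * (1:G)⁻¹ * σ * 1)⁻¹ ∈ N (k+1) := by
        have h : (σ⁻¹ * n⁻¹ * σ * n) * (σ⁻¹ * (1:G)⁻¹ * σ * 1)⁻¹ = σ⁻¹ * n⁻¹ * σ * n := by
          group
        rw [h, hf]
        exact one_mem _
      have h2 := hinj k n hn 1 (one_mem _) h1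
      rw [inv_one, mul_one] at h2
      exact ih (k+1) (by omega) n h2 hf
  -- surjectivity by successive approximation
  have hsurj' : ∀ d k : ℕ, 1 ≤ k → r ≤ k + d → ∀ m ∈ N k,
      ∃ n ∈ N k, σ⁻¹ * n⁻¹ * σ * n = m := by
    intro d
    induction d with
    | zero =>
      intro k _ hk m hm
      rw [hbot k (by omega), Subgroup.mem_bot] at hm
      exact ⟨1, one_mem _, by rw [hm]; group⟩
    | succ d ih =>
      intro k hk1 hk m hm
      obtain ⟨n₁, hn₁, he⟩ := hsurj k m hm
      have hfn₁ := hmem k n₁ hn₁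
      have hg : n₁ * (σ⁻¹ * n₁⁻¹ * σ * n₁)⁻¹ ∈ N 1 :=
        mul_mem (hanti 1 k hk1 hn₁) (inv_mem (hanti 1 k hk1 hfn₁))
      have hm' : n₁ * (σ⁻¹ * n₁⁻¹ * σ * n₁)⁻¹ * m * n₁⁻¹ ∈ N (k+1) := by
        have heq : n₁ * (σ⁻¹ * n₁⁻¹ * σ * n₁)⁻¹ * m * n₁⁻¹
            = (n₁ * (σ⁻¹ * n₁⁻¹ * σ * n₁)⁻¹) * ((σ⁻¹ * n₁⁻¹ * σ * n₁) * m⁻¹)⁻¹ *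
              (n₁ * (σ⁻¹ * n₁⁻¹ * σ * n₁)⁻¹)⁻¹ := by group
        rw [heq]
        exact hnormal (k+1) _ (inv_mem he) _ hg
      obtain ⟨n₂, hn₂, hfn₂⟩ := ih (k+1) (by omega) (by omega) _ hm'
      refine ⟨n₂ * n₁, mul_mem (hanti k (k+1) (by omega) hn₂) hn₁, ?_⟩
      have h : σ⁻¹ * (n₂ * n₁)⁻¹ * σ * (n₂ * n₁)
          = (σ⁻¹ * n₁⁻¹ * σ * n₁) * (n₁⁻¹ * (σ⁻¹ * n₂⁻¹ * σ * n₂) * n₁) := by group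
      rw [h, hfn₂]
      group
  refine ⟨fun n hn => hmem 1 n hn, ?_, ?_⟩
  · -- injectivity
    intro n hn n' hn' heq
    simp only [] at heq
    have hd : n * n'⁻¹ ∈ N 1 := mul_mem hn (inv_mem hn')
    have hd1 : σ⁻¹ * (n * n'⁻¹)⁻¹ * σ * (n * n'⁻¹) = 1 := by
      have h : σ⁻¹ * (n * n'⁻¹)⁻¹ * σ * (n * n'⁻¹)
          = σ⁻¹ * n' * σ * (σ⁻¹ * n⁻¹ * σ * n) * n'⁻¹ := by group
      rw [h, heq]
      group
    have := hfone r 1 (by omega) _ hd hd1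
    rwa [mul_inv_eq_one] at this
  · -- surjectivity
    intro m hm
    obtain ⟨n, hn, hfn⟩ := hsurj' r 1 le_rfl (by omega) m hm
    exact ⟨n, hn, hfn⟩
end

section
/- Let $q$ be a prime power, $l$ a prime, and let $A = \{ s \in \mathbb{F}_{q^l}^\times : s^{(q^l-1)/(q-1)} = 1 \}$ be the norm-one subgroup, with $Z = A \cap \mathbb{F}_q^\times$ (so $Z = \mu_{\gcd(l, q-1)}$ consists of the $\gcd(l,q-1)$-th roots of unity in $\mathbb{F}_q$). Suppose $\theta, \eta : A \to \mathbb{C}^\times$ are characters such that $\theta^{q^i} \eta^{q^j}$ is nontrivial for all $0 \le i, j < l$, and each $\theta^{q^i}\eta^{q^j}$ is trivial on $Z$. Then $\sum_{s \in A \setminus Z} \Big(\sum_{i=0}^{l-1} \theta(s)^{q^i}\Big)\Big(\sum_{j=0}^{l-1} \eta(s)^{q^j}\Big) = -|Z| \cdot l^2$. -/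
/-!
Expanding the product of the two power sums, the summand becomes the sum of the `l²` characters
`θ^{q^i} η^{q^j}` of `A`. Each of them is nontrivial, so it sums to zero over `A`, and each is
trivial on `Z`, so it contributes `|Z|` there; removing `Z` leaves `-|Z| l²`.
-/

open Finset

section Orthogonality

variable {G R : Type*} [Group G] [Fintype G] [CommRing R]

theorem sum_ite_mem_sum_units_hom {ι : Type*} (H : Subgroup G) [DecidablePred (· ∈ H)]
    (I : Finset ι) (χ : ι → G →* Rˣ) (hH : ∀ k ∈ I, ∀ h ∈ H, χ k h = 1) :
    ∑ g, (if g ∈ H then ∑ k ∈ I, (χ k g : R) else 0) = Nat.card H * #I := by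
  have hconst : ∀ g ∈ univ.filter (· ∈ H), ∑ k ∈ I, (χ k g : R) = #I := fun g hg => by
    rw [sum_congr rfl fun k hk => by rw [hH k hk g (mem_filter.mp hg).2, Units.val_one],
      sum_const, nsmul_one]
  rw [← sum_filter, sum_congr rfl hconst, sum_const, nsmul_eq_mul, Nat.card_eq_fintype_card,
    Fintype.card_subtype]

variable [IsDomain R]

theorem sum_units_hom_eq_zero {χ : G →* Rˣ} (hχ : χ ≠ 1) : ∑ g, (χ g : R) = 0 :=
  sum_hom_units_eq_zero ((Units.coeHom R).comp χ) fun h =>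
    hχ <| MonoidHom.ext fun g => Units.ext (DFunLike.congr_fun h g)

theorem sum_compl_sum_units_hom {ι : Type*} (H : Subgroup G) [DecidablePred (· ∈ H)]
    (I : Finset ι) (χ : ι → G →* Rˣ) (hχ : ∀ k ∈ I, χ k ≠ 1)
    (hH : ∀ k ∈ I, ∀ h ∈ H, χ k h = 1) :
    ∑ g, (if g ∈ H then 0 else ∑ k ∈ I, (χ k g : R)) = -(Nat.card H * #I) := by
  have hfull : ∑ g, ∑ k ∈ I, (χ k g : R) = 0 := by
    rw [sum_comm]
    exact sum_eq_zero fun k hk => sum_units_hom_eq_zero (hχ k hk)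
  have hsum_H := sum_ite_mem_sum_units_hom H I χ hH
  calc ∑ g, (if g ∈ H then 0 else ∑ k ∈ I, (χ k g : R))
      = ∑ g, ∑ k ∈ I, (χ k g : R) - ∑ g, (if g ∈ H then ∑ k ∈ I, (χ k g : R) else 0) := by
        rw [← sum_sub_distrib]
        exact sum_congr rfl fun g _ => by split_ifs <;> simp
    _ = -(Nat.card H * #I) := by rw [hfull, hsum_H, zero_sub]

end Orthogonality

open scoped Classical in
theorem stmt17_general (q l : ℕ)
    (F : Type) [Field F] [Fintype F]
    (A Z : Subgroup Fˣ)
    (hZ : ∀ s : Fˣ, s ∈ Z ↔ s ∈ A ∧ s ^ (q - 1) = 1)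
    (θ η : A →* ℂˣ)
    (hnontriv : ∀ i < l, ∀ j < l, ∃ s : A, (θ s) ^ (q ^ i) * (η s) ^ (q ^ j) ≠ 1)
    (htrivZ : ∀ i < l, ∀ j < l, ∀ s : A, (s : Fˣ) ∈ Z →
      (θ s) ^ (q ^ i) * (η s) ^ (q ^ j) = 1) :
    ∑ s : A, (if (s : Fˣ) ∈ Z then 0 else
        (∑ i ∈ Finset.range l, ((θ s : ℂˣ) : ℂ) ^ (q ^ i)) *
        (∑ j ∈ Finset.range l, ((η s : ℂˣ) : ℂ) ^ (q ^ j)))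
      = -((Nat.card Z : ℂ) * (l : ℂ) ^ 2) := by
  let χ : ℕ × ℕ → A →* ℂˣ := fun k => θ ^ q ^ k.1 * η ^ q ^ k.2
  have hexpand : ∀ s : A, (∑ i ∈ range l, (θ s : ℂ) ^ q ^ i) * (∑ j ∈ range l, (η s : ℂ) ^ q ^ j)
      = ∑ k ∈ range l ×ˢ range l, (χ k s : ℂ) := fun s => by
    simp [χ, sum_mul_sum, sum_product]
  have hnontrivχ : ∀ k ∈ range l ×ˢ range l, χ k ≠ 1 := fun k hk h => by
    simp only [mem_product, mem_range] at hk
    obtain ⟨s, hs⟩ := hnontriv k.1 hk.1 k.2 hk.2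
    simpa [χ] using hs <| DFunLike.congr_fun h s
  have htrivχ : ∀ k ∈ range l ×ˢ range l, ∀ s ∈ Z.subgroupOf A, χ k s = 1 := fun k hk s hs => by
    simp only [mem_product, mem_range] at hk
    simpa [χ] using htrivZ k.1 hk.1 k.2 hk.2 s hs
  have hcardZ : Nat.card (Z.subgroupOf A) = Nat.card Z :=
    Nat.card_congr (Subgroup.subgroupOfEquivOfLe fun s hs => ((hZ s).mp hs).1).toEquiv
  have hsum := sum_compl_sum_units_hom (Z.subgroupOf A) (range l ×ˢ range l) χ hnontrivχ htrivχ
  simp_rw [hexpand]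
  rw [hcardZ, card_product, card_range] at hsum
  rwa [Nat.cast_mul, ← sq] at hsum

open scoped Classical in
theorem stmt17 (p q l e : ℕ) (hp : p.Prime) (hq : q = p ^ e) (he : 1 ≤ e) (hl : l.Prime)
    (F : Type) [Field F] [Fintype F] (hF : Fintype.card F = q ^ l)
    (A Z : Subgroup Fˣ)
    (hA : ∀ s : Fˣ, s ∈ A ↔ s ^ ((q ^ l - 1) / (q - 1)) = 1)
    (hZ : ∀ s : Fˣ, s ∈ Z ↔ s ∈ A ∧ s ^ (q - 1) = 1)
    (θ η : A →* ℂˣ)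
    (hnontriv : ∀ i < l, ∀ j < l, ∃ s : A, (θ s) ^ (q ^ i) * (η s) ^ (q ^ j) ≠ 1)
    (htrivZ : ∀ i < l, ∀ j < l, ∀ s : A, (s : Fˣ) ∈ Z →
      (θ s) ^ (q ^ i) * (η s) ^ (q ^ j) = 1) :
    ∑ s : A, (if (s : Fˣ) ∈ Z then 0 else
        (∑ i ∈ Finset.range l, ((θ s : ℂˣ) : ℂ) ^ (q ^ i)) *
        (∑ j ∈ Finset.range l, ((η s : ℂˣ) : ℂ) ^ (q ^ j)))
      = -((Nat.card Z : ℂ) * (l : ℂ) ^ 2) :=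
  stmt17_general q l F A Z hZ θ η hnontriv htrivZ
end
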